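/- Let 0 < γ < 1 < β < α < 2^{1/γ−1}, and let x = (x_i), y = (y_i) ∈ ℓ_γ with ‖x‖_{ℓ_γ} = 1 and ‖y‖_{ℓ_γ} ≤ β. Then Σ_{i=1}^∞ (|2^{1/γ−1}x_i − y_i|^γ + |2^{1/γ−1}x_i + y_i|^γ) ≥ A(α,β,γ) > 2, where A(α,β,γ) = 2(β/α)^γ + [(2^{1/γ−1}−α)^γ + (2^{1/γ−1}+α)^γ](1 − (β/α)^γ). -/

import Mathlib

/-! Put `c = 2^(1/γ-1)`, so that `(2c)^γ = 2`; then `K = (c-α)^γ + (c+α)^γ > 2` by strict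
subadditivity of `t ↦ t^γ`. Termwise,
`|c xᵢ - yᵢ|^γ + |c xᵢ + yᵢ|^γ ≥ |2c xᵢ|^γ = 2|xᵢ|^γ`, and where `|yᵢ| ≤ α|xᵢ|` concavity of
`t ↦ t^γ` improves this to `K|xᵢ|^γ`. On the other indices `α^γ|xᵢ|^γ ≤ |yᵢ|^γ`, so they carry at
most `(β/α)^γ` of `∑ |xᵢ|^γ = 1`, and the sum is at least `K - (K-2)(β/α)^γ = A(α,β,γ)`. -/

noncomputable section

/-- Membership in the sequence space `ℓ_γ`. -/
def Memlg (γ : ℝ) (x : ℕ → ℝ) : Prop := Summable fun i => |x i| ^ γ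

/-- The `ℓ_γ` γ-norm. -/
def lgNorm (γ : ℝ) (x : ℕ → ℝ) : ℝ := (∑' i, |x i| ^ γ) ^ (1/γ)

/-- The constant `A(α,β,γ)`. -/
def Aconst (α β γ : ℝ) : ℝ :=
  2 * (β/α) ^ γ +
    (((2:ℝ) ^ (1/γ - 1) - α) ^ γ + ((2:ℝ) ^ (1/γ - 1) + α) ^ γ) * (1 - (β/α) ^ γ)

open Real

lemma Real.rpow_add_lt_add_rpow {p a b : ℝ} (ha : 0 < a) (hb : 0 < b) (hp1 : p < 1) :
    (a + b) ^ p < a ^ p + b ^ p := by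
  have hs : 0 < a + b := add_pos ha hb
  have key : ∀ t, 0 < t → t < a + b → (a + b) ^ p * (t / (a + b)) < t ^ p := fun t ht hts =>
    calc (a + b) ^ p * (t / (a + b)) < (a + b) ^ p * (t / (a + b)) ^ p :=
          mul_lt_mul_of_pos_left
            (self_lt_rpow_of_lt_one (by positivity) ((div_lt_one hs).2 hts) hp1) (by positivity)
      _ = t ^ p := by rw [← mul_rpow hs.le (by positivity), mul_div_cancel₀ _ hs.ne']
  calc (a + b) ^ p = (a + b) ^ p * (a / (a + b)) + (a + b) ^ p * (b / (a + b)) := by field_simp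
    _ < a ^ p + b ^ p := add_lt_add (key a ha (by linarith)) (key b hb (by linarith))

lemma Real.abs_add_rpow_le {p : ℝ} (hp0 : 0 ≤ p) (hp1 : p ≤ 1) (a b : ℝ) :
    |a + b| ^ p ≤ |a| ^ p + |b| ^ p :=
  (rpow_le_rpow (abs_nonneg _) (abs_add_le a b) hp0).trans
    (rpow_add_le_add_rpow (abs_nonneg a) (abs_nonneg b) hp0 hp1)

lemma Real.abs_sub_rpow_le {p : ℝ} (hp0 : 0 ≤ p) (hp1 : p ≤ 1) (a b : ℝ) :
    |a - b| ^ p ≤ |a| ^ p + |b| ^ p := by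
  simpa only [sub_eq_add_neg, abs_neg] using abs_add_rpow_le hp0 hp1 a (-b)

lemma two_mul_two_rpow_one_div_sub_one_rpow {γ : ℝ} (hγ : γ ≠ 0) :
    (2 * (2 : ℝ) ^ (1 / γ - 1)) ^ γ = 2 := by
  rw [← rpow_one_add' zero_le_two (by simpa using hγ), add_sub_cancel, ← rpow_mul zero_le_two,
    one_div, inv_mul_cancel₀ hγ, rpow_one]

lemma two_lt_rpow_sub_add_rpow_add {γ α : ℝ} (hγ0 : 0 < γ) (hγ1 : γ < 1) (hα0 : 0 ≤ α)
    (hα : α < (2:ℝ) ^ (1/γ - 1)) :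
    2 < ((2:ℝ) ^ (1/γ - 1) - α) ^ γ + ((2:ℝ) ^ (1/γ - 1) + α) ^ γ := by
  have := rpow_add_lt_add_rpow (sub_pos.2 hα) (by positivity : 0 < (2:ℝ) ^ (1/γ - 1) + α) hγ1
  rwa [sub_add_add_cancel, ← two_mul, two_mul_two_rpow_one_div_sub_one_rpow hγ0.ne'] at this

lemma ConcaveOn.add_le_add_of_abs_le {s : Set ℝ} {f : ℝ → ℝ} (hf : ConcaveOn ℝ s f)
    {c r t : ℝ} (hl : c - r ∈ s) (hr : c + r ∈ s) (ht : |t| ≤ r) :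
    f (c - r) + f (c + r) ≤ f (c - t) + f (c + t) := by
  obtain ⟨htl, htr⟩ := abs_le.1 ht
  rcases (abs_nonneg t).trans ht |>.eq_or_lt with hr0 | hr0
  · obtain rfl : t = 0 := by linarith
    simp [← hr0]
  -- `c ∓ t` are the convex combinations of `c - r` and `c + r` with weights `(r ± t) / 2r`
  have hw₁ : 0 ≤ (r + t) / (2 * r) := div_nonneg (by linarith) (by positivity)
  have hw₂ : 0 ≤ (r - t) / (2 * r) := div_nonneg (by linarith) (by positivity)
  have hsum : (r + t) / (2 * r) + (r - t) / (2 * r) = 1 := by field_simp; ring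
  have h₁ := hf.2 hl hr hw₁ hw₂ hsum
  have h₂ := hf.2 hl hr hw₂ hw₁ (by rwa [add_comm])
  simp only [smul_eq_mul] at h₁ h₂
  rw [show (r + t) / (2 * r) * (c - r) + (r - t) / (2 * r) * (c + r) = c - t by
    field_simp; ring] at h₁
  rw [show (r - t) / (2 * r) * (c - r) + (r + t) / (2 * r) * (c + r) = c + t by
    field_simp; ring] at h₂
  linear_combination h₁ + h₂ - (f (c - r) + f (c + r)) * hsum

lemma apply_abs_sub_add_apply_abs_add (f : ℝ → ℝ) (u v : ℝ) :
    f |u - v| + f |u + v| = f |(|u| - |v|)| + f (|u| + |v|) := by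
  rcases le_total 0 u with hu | hu <;> rcases le_total 0 v with hv | hv
  · rw [abs_of_nonneg hu, abs_of_nonneg hv, abs_of_nonneg (add_nonneg hu hv)]
  · rw [abs_of_nonneg hu, abs_of_nonpos hv, sub_neg_eq_add, abs_of_nonneg (by linarith : 0 ≤ u - v),
      ← sub_eq_add_neg, add_comm]
  · rw [abs_of_nonpos hu, abs_of_nonneg hv, abs_of_nonpos (by linarith : u - v ≤ 0), neg_sub,
      neg_sub_left, abs_neg, neg_add_eq_sub, add_comm, add_comm v u]
  · rw [abs_of_nonpos hu, abs_of_nonpos hv, abs_of_nonpos (add_nonpos hu hv), sub_neg_eq_add,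
      neg_add_eq_sub, ← abs_neg (u - v), neg_sub, neg_add]

lemma rpow_two_mul_mul_rpow_le {γ c : ℝ} (hγ0 : 0 ≤ γ) (hγ1 : γ ≤ 1) (hc : 0 ≤ c) (u v : ℝ) :
    (2 * c) ^ γ * |u| ^ γ ≤ |c * u - v| ^ γ + |c * u + v| ^ γ :=
  calc (2 * c) ^ γ * |u| ^ γ = |(c * u - v) + (c * u + v)| ^ γ := by
        rw [← mul_rpow (by positivity) (abs_nonneg u), ← abs_of_nonneg (by positivity : 0 ≤ 2 * c),
          ← abs_mul]
        ring_nf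
    _ ≤ _ := abs_add_rpow_le hγ0 hγ1 _ _

lemma mul_le_abs_sub_rpow_add_abs_add_rpow {γ c α u v : ℝ} (hγ0 : 0 ≤ γ) (hγ1 : γ ≤ 1)
    (hα : 0 ≤ α) (hαc : α ≤ c) (hv : |v| ≤ α * |u|) :
    ((c - α) ^ γ + (c + α) ^ γ) * |u| ^ γ ≤ |c * u - v| ^ γ + |c * u + v| ^ γ := by
  have hc : 0 ≤ c := hα.trans hαc
  have hvc : |v| ≤ c * |u| := hv.trans (mul_le_mul_of_nonneg_right hαc (abs_nonneg u))
  rw [apply_abs_sub_add_apply_abs_add (· ^ γ), abs_mul, abs_of_nonneg hc,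
    abs_of_nonneg (sub_nonneg.2 hvc)]
  calc ((c - α) ^ γ + (c + α) ^ γ) * |u| ^ γ
      = (c * |u| - α * |u|) ^ γ + (c * |u| + α * |u|) ^ γ := by
        rw [← sub_mul, ← add_mul, mul_rpow (by linarith) (abs_nonneg u),
          mul_rpow (by linarith) (abs_nonneg u), add_mul]
    _ ≤ (c * |u| - |v|) ^ γ + (c * |u| + |v|) ^ γ :=
        (concaveOn_rpow hγ0 hγ1).add_le_add_of_abs_le
          (Set.mem_Ici.2 (by nlinarith [abs_nonneg u])) (Set.mem_Ici.2 (by positivity))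
          (by rwa [abs_abs])

lemma Memlg.add {γ : ℝ} (hγ0 : 0 ≤ γ) (hγ1 : γ ≤ 1) {x y : ℕ → ℝ} (hx : Memlg γ x)
    (hy : Memlg γ y) : Memlg γ (fun i => x i + y i) :=
  Summable.of_nonneg_of_le (fun _ => rpow_nonneg (abs_nonneg _) _)
    (fun i => abs_add_rpow_le hγ0 hγ1 (x i) (y i)) (Summable.add hx hy)

lemma Memlg.sub {γ : ℝ} (hγ0 : 0 ≤ γ) (hγ1 : γ ≤ 1) {x y : ℕ → ℝ} (hx : Memlg γ x)
    (hy : Memlg γ y) : Memlg γ (fun i => x i - y i) :=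
  Summable.of_nonneg_of_le (fun _ => rpow_nonneg (abs_nonneg _) _)
    (fun i => abs_sub_rpow_le hγ0 hγ1 (x i) (y i)) (Summable.add hx hy)

lemma Memlg.const_mul {γ : ℝ} {x : ℕ → ℝ} (hx : Memlg γ x) (c : ℝ) :
    Memlg γ (fun i => c * x i) := by
  simpa only [Memlg, abs_mul, mul_rpow (abs_nonneg c) (abs_nonneg _)] using hx.mul_left (|c| ^ γ)

lemma lgNorm_rpow {γ : ℝ} (hγ : γ ≠ 0) (x : ℕ → ℝ) : lgNorm γ x ^ γ = ∑' i, |x i| ^ γ := by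
  rw [lgNorm, ← rpow_mul (tsum_nonneg fun _ => rpow_nonneg (abs_nonneg _) _), one_div,
    inv_mul_cancel₀ hγ, rpow_one]

lemma tsum_abs_rpow_le_of_lgNorm_le {γ β : ℝ} (hγ : 0 < γ) {x : ℕ → ℝ} (h : lgNorm γ x ≤ β) :
    ∑' i, |x i| ^ γ ≤ β ^ γ := by
  rw [← lgNorm_rpow hγ.ne']
  exact rpow_le_rpow (rpow_nonneg (tsum_nonneg fun _ => rpow_nonneg (abs_nonneg _) _) _) h hγ.le

-- Where `k a ≤ b` only `m a ≤ L` is known, but those indices carry at most `∑ b / k` of `∑ a`.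
lemma mul_tsum_sub_le_tsum_of_forall_or {ι : Type*} {a b L : ι → ℝ} {m K k : ℝ} (ha : Summable a)
    (hb : Summable b) (hL : Summable L) (hb0 : 0 ≤ b) (hmK : m ≤ K) (hk : 0 < k)
    (hm : ∀ i, m * a i ≤ L i) (hsplit : ∀ i, K * a i ≤ L i ∨ k * a i ≤ b i) :
    K * ∑' i, a i - (K - m) * ((∑' i, b i) / k) ≤ ∑' i, L i := by
  set w := {i | k * a i ≤ b i}.indicator a
  have hw : Summable w := ha.indicator _
  have hw_of_le : ∀ i, k * a i ≤ b i → w i = a i := fun i hi =>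
    Set.indicator_of_mem (show i ∈ {i | k * a i ≤ b i} from hi) a
  have hw_of_lt : ∀ i, ¬k * a i ≤ b i → w i = 0 := fun i hi =>
    Set.indicator_of_notMem (show i ∉ {i | k * a i ≤ b i} from hi) a
  have hwb : ∀ i, k * w i ≤ b i := by
    intro i
    by_cases hi : k * a i ≤ b i
    · rwa [hw_of_le i hi]
    · rw [hw_of_lt i hi, mul_zero]; exact hb0 i
  have hwL : ∀ i, m * a i + (K - m) * (a i - w i) ≤ L i := by
    intro i
    by_cases hi : k * a i ≤ b i
    · rw [hw_of_le i hi, sub_self, mul_zero, add_zero]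
      exact hm i
    · rw [hw_of_lt i hi, sub_zero]
      linarith [(hsplit i).resolve_right hi]
  have hW : k * ∑' i, w i ≤ ∑' i, b i := by
    rw [← tsum_mul_left]; exact hw.mul_left k |>.tsum_le_tsum hwb hb
  calc K * ∑' i, a i - (K - m) * ((∑' i, b i) / k)
      ≤ K * ∑' i, a i - (K - m) * ∑' i, w i := by
        gcongr
        rwa [le_div_iff₀ hk, mul_comm]
    _ = ∑' i, (m * a i + (K - m) * (a i - w i)) := by
        rw [(ha.mul_left m).tsum_add ((ha.sub hw).mul_left _), tsum_mul_left, tsum_mul_left,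
          ha.tsum_sub hw]
        ring
    _ ≤ ∑' i, L i := ((ha.mul_left m).add ((ha.sub hw).mul_left _)).tsum_le_tsum hwL hL

theorem two_point_inequality (γ β α : ℝ) (hγ0 : 0 < γ) (hγ1 : γ < 1)
    (hβ : 1 < β) (hβα : β < α) (hα : α < (2:ℝ) ^ (1/γ - 1))
    (x y : ℕ → ℝ) (hx : Memlg γ x) (hy : Memlg γ y)
    (hx1 : lgNorm γ x = 1) (hyβ : lgNorm γ y ≤ β) :
    2 < Aconst α β γ ∧
      Aconst α β γ ≤
        ∑' i, (|(2:ℝ) ^ (1/γ - 1) * x i - y i| ^ γ +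
          |(2:ℝ) ^ (1/γ - 1) * x i + y i| ^ γ) := by
  set c : ℝ := (2:ℝ) ^ (1/γ - 1)
  set K : ℝ := (c - α) ^ γ + (c + α) ^ γ
  have hα0 : 0 < α := by linarith
  have hK : 2 < K := two_lt_rpow_sub_add_rpow_add hγ0 hγ1 hα0.le hα
  have hx_sum : ∑' i, |x i| ^ γ = 1 := by rw [← lgNorm_rpow hγ0.ne', hx1, one_rpow]
  have hL : Summable fun i => |c * x i - y i| ^ γ + |c * x i + y i| ^ γ :=
    Summable.add ((hx.const_mul c).sub hγ0.le hγ1.le hy) ((hx.const_mul c).add hγ0.le hγ1.le hy)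
  have h2 (i : ℕ) : 2 * |x i| ^ γ ≤ |c * x i - y i| ^ γ + |c * x i + y i| ^ γ := by
    have := rpow_two_mul_mul_rpow_le hγ0.le hγ1.le (hα0.trans hα).le (x i) (y i)
    rwa [two_mul_two_rpow_one_div_sub_one_rpow hγ0.ne'] at this
  have hsplit (i : ℕ) : K * |x i| ^ γ ≤ |c * x i - y i| ^ γ + |c * x i + y i| ^ γ ∨
      α ^ γ * |x i| ^ γ ≤ |y i| ^ γ := by
    rcases le_total (|y i|) (α * |x i|) with hyx | hxy
    · exact .inl (mul_le_abs_sub_rpow_add_abs_add_rpow hγ0.le hγ1.le hα0.le hα.le hyx)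
    · exact .inr (mul_rpow hα0.le (abs_nonneg _) ▸ rpow_le_rpow (by positivity) hxy hγ0.le)
  have hA : Aconst α β γ = K - (K - 2) * (β ^ γ / α ^ γ) := by
    rw [Aconst, div_rpow (by linarith) hα0.le]
    ring
  have hβα_rpow : β ^ γ / α ^ γ < 1 :=
    (div_lt_one (by positivity)).2 (rpow_lt_rpow (by linarith) hβα hγ0)
  refine ⟨by nlinarith, ?_⟩
  calc Aconst α β γ = K * 1 - (K - 2) * (β ^ γ / α ^ γ) := by rw [hA, mul_one]
    _ ≤ K * ∑' i, |x i| ^ γ - (K - 2) * ((∑' i, |y i| ^ γ) / α ^ γ) := by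
        rw [hx_sum]
        gcongr
        exact tsum_abs_rpow_le_of_lgNorm_le hγ0 hyβ
    _ ≤ _ := mul_tsum_sub_le_tsum_of_forall_or hx hy hL (fun _ => rpow_nonneg (abs_nonneg _) _)
        hK.le (by positivity) h2 hsplit
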